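/- Let K be a positive integer, T > 0, ω₀ = 2π/T, and let 0 ≤ t₁ < t₂ < ⋯ < t_N < T with N ≥ 2K + 2. Let V ∈ ℂ^{N×(2K+1)} be the matrix with rows indexed by n = 1, …, N and columns indexed by k = −K, …, K, with entries V[n, k] = e^{i k ω₀ t_n} for k ≠ 0 and V[n, 0] = t_n. If x ∈ ℂ^{2K+1} and c ∈ ℂ satisfy V x = c·𝟙_N (where 𝟙_N is the all-ones vector in ℂ^N), then x = 0 and c = 0. -/

import Mathlib

/-!
With `f s = x₀ s + ∑_{k ≠ 0} x_k e^{i k ω₀ s} - c`, the equation `V x = c 𝟙` says that `f`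
vanishes at the `2K + 2` points `tₙ`. Rolle's theorem, applied to `Re f` and `Im f` separately,
gives `2K + 1` distinct zeros in `[0, T)` of each of `Re f'` and `Im f'`. Now
`f' = ∑ b_k e^{i k ω₀ s}` with `b₀ = x₀` and `b_k = i k ω₀ x_k`, and its real and imaginary
parts are again trigonometric polynomials of degree `K`, with coefficients `(b_k ± conj b_{-k})/2`.
Multiplied by `e^{i K ω₀ s}`, such a polynomial becomes an ordinary polynomial of degree `2K` in
`e^{i ω₀ s}`, which is injective on `[0, T)`; so `2K + 1` zeros force it to vanish. Hence `b = 0`,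
so `x = 0`, and then `c = 0`.
-/

open Complex Set
open scoped Real ComplexConjugate

section TrigPoly

variable (K : ℕ) (ω : ℝ)

noncomputable def expMode (j : Fin (2 * K + 1)) (s : ℝ) : ℂ :=
  exp (I * (((j : ℤ) - (K : ℤ) : ℤ) : ℂ) * (ω : ℂ) * (s : ℂ))

noncomputable def trigPoly (b : Fin (2 * K + 1) → ℂ) (s : ℝ) : ℂ :=
  ∑ j, b j * expMode K ω j s

variable {K ω}

lemma conj_expMode (j : Fin (2 * K + 1)) (s : ℝ) :
    conj (expMode K ω j s) = expMode K ω j.rev s := by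
  have hrev : ((j.rev : ℤ) - K) = -((j : ℤ) - K) := by
    have hj := j.isLt
    rw [Fin.val_rev]
    omega
  rw [expMode, expMode, ← exp_conj, hrev]
  simp only [map_mul, conj_I, conj_ofReal, map_intCast]
  push_cast
  ring_nf

lemma conj_trigPoly (b : Fin (2 * K + 1) → ℂ) (s : ℝ) :
    conj (trigPoly K ω b s) = trigPoly K ω (fun j => conj (b j.rev)) s := by
  rw [trigPoly, trigPoly, map_sum, ← Equiv.sum_comp Fin.revPerm]
  simp [conj_expMode]

lemma trigPoly_add (b c : Fin (2 * K + 1) → ℂ) (s : ℝ) :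
    trigPoly K ω (b + c) s = trigPoly K ω b s + trigPoly K ω c s := by
  simp only [trigPoly, Pi.add_apply, add_mul, Finset.sum_add_distrib]

lemma trigPoly_sub (b c : Fin (2 * K + 1) → ℂ) (s : ℝ) :
    trigPoly K ω (b - c) s = trigPoly K ω b s - trigPoly K ω c s := by
  simp only [trigPoly, Pi.sub_apply, sub_mul, Finset.sum_sub_distrib]

lemma trigPoly_mul_exp (b : Fin (2 * K + 1) → ℂ) (s : ℝ) :
    trigPoly K ω b s * exp (I * K * ω * s) =
      ∑ j : Fin (2 * K + 1), b j * exp (I * ω * s) ^ (j : ℕ) := by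
  rw [trigPoly, Finset.sum_mul]
  refine Finset.sum_congr rfl fun j _ => ?_
  rw [mul_assoc, expMode, ← exp_add, ← exp_nat_mul]
  push_cast
  ring_nf

theorem eq_zero_of_trigPoly_eq_zero {b : Fin (2 * K + 1) → ℂ} {s : Fin (2 * K + 1) → ℝ}
    (hs : Function.Injective fun i => exp (I * ω * s i)) (h : ∀ i, trigPoly K ω b (s i) = 0) :
    b = 0 := by
  refine Matrix.eq_zero_of_mulVec_eq_zero (Matrix.det_vandermonde_ne_zero_iff.2 hs) ?_
  funext i
  simp only [Matrix.mulVec, dotProduct, Matrix.vandermonde_apply, mul_comm (_ ^ _), Pi.zero_apply]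
  rw [← trigPoly_mul_exp, h, zero_mul]

end TrigPoly

theorem injOn_exp_two_pi_div_mul_Ico {T : ℝ} (hT : 0 < T) :
    InjOn (fun s : ℝ => exp (I * (2 * π / T : ℝ) * s)) (Ico 0 T) := by
  intro a ha b hb hab
  have hscale : ∀ x ∈ Ico 0 T, 2 * π / T * x ∈ Ico 0 (2 * π) := fun x ⟨h0, hT'⟩ =>
    ⟨by positivity, by rw [div_mul_eq_mul_div, div_lt_iff₀ hT]; gcongr⟩
  have := Circle.exp_injOn_Ico (by simp) (hscale a ha) (hscale b hb)
    (Subtype.ext <| by simpa [Circle.coe_exp, mul_comm, mul_left_comm] using hab)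
  exact mul_left_cancel₀ (by positivity) this

theorem exists_strictMono_hasDerivAt_eq_zero {m : ℕ} {f f' : ℝ → ℝ}
    (hf : ∀ x, HasDerivAt f (f' x) x) {t : Fin (m + 1) → ℝ} (ht : StrictMono t)
    (hft : ∀ i, f (t i) = 0) :
    ∃ s : Fin m → ℝ, StrictMono s ∧ (∀ i, s i ∈ Ioo (t i.castSucc) (t i.succ)) ∧
      ∀ i, f' (s i) = 0 := by
  have hcont : Continuous f := continuous_iff_continuousAt.2 fun x => (hf x).continuousAt
  choose s hs_mem hs_zero using fun i : Fin m =>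
    exists_hasDerivAt_eq_zero (ht i.castSucc_lt_succ) hcont.continuousOn
      ((hft _).trans (hft _).symm) fun x _ => hf x
  refine ⟨s, fun i j hij => ?_, hs_mem, hs_zero⟩
  calc s i < t i.succ := (hs_mem i).2
    _ ≤ t j.castSucc := ht.monotone (Fin.succ_le_castSucc_iff.2 hij)
    _ < s j := (hs_mem j).1

theorem eq_zero_of_hasDerivAt_trigPoly {K : ℕ} {T : ℝ} (hT : 0 < T) {f : ℝ → ℂ}
    {b : Fin (2 * K + 1) → ℂ} (hf : ∀ s, HasDerivAt f (trigPoly K (2 * π / T) b s) s)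
    {t : Fin (2 * K + 2) → ℝ} (ht : StrictMono t) (ht_mem : ∀ i, t i ∈ Ico 0 T)
    (hft : ∀ i, f (t i) = 0) : b = 0 := by
  have hrolle : ∀ L : ℂ →L[ℝ] ℝ, ∃ s : Fin (2 * K + 1) → ℝ,
      (Function.Injective fun i => exp (I * (2 * π / T : ℝ) * s i)) ∧
        ∀ i, L (trigPoly K (2 * π / T) b (s i)) = 0 := by
    intro L
    obtain ⟨s, hs_mono, hs_mem, hs_zero⟩ := exists_strictMono_hasDerivAt_eq_zero
      (fun x => L.hasFDerivAt.comp_hasDerivAt x (hf x)) ht (fun i => by simp [hft])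
    have hs_Ico : ∀ i, s i ∈ Ico 0 T := fun i =>
      ⟨(ht_mem _).1.trans (hs_mem i).1.le, (hs_mem i).2.trans (ht_mem _).2⟩
    exact ⟨s, fun i j hij => hs_mono.injective
      (injOn_exp_two_pi_div_mul_Ico hT (hs_Ico i) (hs_Ico j) hij), hs_zero⟩
  obtain ⟨u, hu, hre⟩ := hrolle reCLM
  obtain ⟨v, hv, him⟩ := hrolle imCLM
  set b' : Fin (2 * K + 1) → ℂ := fun j => conj (b j.rev)
  have hadd : b + b' = 0 := eq_zero_of_trigPoly_eq_zero hu fun i => by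
    rw [trigPoly_add, ← conj_trigPoly, add_conj]
    simpa using hre i
  have hsub : b - b' = 0 := eq_zero_of_trigPoly_eq_zero hv fun i => by
    rw [trigPoly_sub, ← conj_trigPoly, sub_conj]
    simpa using him i
  funext j
  rw [Pi.zero_apply]
  have hj₁ : b j + b' j = 0 := congrFun hadd j
  have hj₂ : b j - b' j = 0 := congrFun hsub j
  linear_combination (hj₁ + hj₂) / 2

section Column

variable (K : ℕ) (ω : ℝ)

noncomputable def vColumn (j : Fin (2 * K + 1)) (s : ℝ) : ℂ :=
  if ((j : ℤ) - (K : ℤ)) = 0 then (s : ℂ) else expMode K ω j s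

noncomputable def vColumnSlope (j : Fin (2 * K + 1)) : ℂ :=
  if ((j : ℤ) - (K : ℤ)) = 0 then 1 else I * (((j : ℤ) - (K : ℤ) : ℤ) : ℂ) * (ω : ℂ)

variable {K ω}

lemma vColumnSlope_ne_zero (hω : ω ≠ 0) (j : Fin (2 * K + 1)) : vColumnSlope K ω j ≠ 0 := by
  unfold vColumnSlope
  split_ifs with hj
  · exact one_ne_zero
  · exact mul_ne_zero (mul_ne_zero I_ne_zero (by exact_mod_cast hj)) (ofReal_ne_zero.2 hω)

lemma hasDerivAt_expMode (j : Fin (2 * K + 1)) (s : ℝ) :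
    HasDerivAt (expMode K ω j) (I * (((j : ℤ) - (K : ℤ) : ℤ) : ℂ) * ω * expMode K ω j s) s := by
  have h := ((hasDerivAt_id s).ofReal_comp.const_mul
    (I * (((j : ℤ) - (K : ℤ) : ℤ) : ℂ) * ω)).cexp
  simp only [id, ofReal_one, mul_one] at h
  rw [mul_comm]
  exact h

lemma hasDerivAt_vColumn (j : Fin (2 * K + 1)) (s : ℝ) :
    HasDerivAt (vColumn K ω j) (vColumnSlope K ω j * expMode K ω j s) s := by
  unfold vColumn vColumnSlope
  split_ifs with hj
  · simpa [expMode, hj] using (hasDerivAt_id s).ofReal_comp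
  · simpa [mul_comm] using hasDerivAt_expMode j s

lemma hasDerivAt_sum_vColumn (x : Fin (2 * K + 1) → ℂ) (s : ℝ) :
    HasDerivAt (fun s => ∑ j, x j * vColumn K ω j s)
      (trigPoly K ω (fun j => x j * vColumnSlope K ω j) s) s := by
  simpa only [trigPoly, mul_assoc] using
    HasDerivAt.fun_sum fun j _ => (hasDerivAt_vColumn j s).const_mul (x j)

end Column

theorem matrixV_eq_const_implies_zero_general
    (K : ℕ) (T : ℝ) (hT : 0 < T)
    (N : ℕ) (hN : 2 * K + 2 ≤ N)
    (t : Fin N → ℝ) (ht_mono : StrictMono t)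
    (ht_nonneg : ∀ n, 0 ≤ t n) (ht_lt : ∀ n, t n < T)
    (V : Matrix (Fin N) (Fin (2 * K + 1)) ℂ)
    (hV : ∀ (n : Fin N) (j : Fin (2 * K + 1)),
      V n j =
        if ((j : ℤ) - (K : ℤ)) = 0 then ((t n : ℝ) : ℂ)
        else Complex.exp (Complex.I * (((j : ℤ) - (K : ℤ) : ℤ) : ℂ)
              * ((2 * Real.pi / T : ℝ) : ℂ) * ((t n : ℝ) : ℂ))) :
    ∀ (x : Fin (2 * K + 1) → ℂ) (c : ℂ),
      V.mulVec x = (fun _ : Fin N => c) → (x = 0 ∧ c = 0) := by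
  intro x c hVx
  set ω : ℝ := 2 * π / T
  set f : ℝ → ℂ := fun s => ∑ j, x j * vColumn K ω j s - c
  have hf : ∀ s, HasDerivAt f (trigPoly K ω (fun j => x j * vColumnSlope K ω j) s) s :=
    fun s => (hasDerivAt_sum_vColumn x s).sub_const c
  have hft : ∀ n, f (t n) = 0 := fun n => by
    rw [sub_eq_zero, ← congrFun hVx n]
    simp only [Matrix.mulVec, dotProduct, hV, vColumn, expMode, mul_comm]
  have hcoeffs := eq_zero_of_hasDerivAt_trigPoly hT hf (ht_mono.comp (Fin.strictMono_castLE hN))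
    (fun i => ⟨ht_nonneg _, ht_lt _⟩) (fun i => hft _)
  have hx : x = 0 := funext fun j =>
    (mul_eq_zero.1 (congrFun hcoeffs j)).resolve_right (vColumnSlope_ne_zero (by positivity) j)
  refine ⟨hx, ?_⟩
  simpa [hx] using (congrFun hVx ⟨0, by omega⟩).symm

/-- **Core null-space step.** The matrix `V` with entries `V[n,k] = e^{i k ω₀ tₙ}` for
`k ≠ 0` and `V[n,0] = tₙ` (columns indexed by `k = j - K`) admits no nonzero solution of
`V x = c · 𝟙` when `N ≥ 2K + 2`: necessarily `x = 0` and `c = 0`. -/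
theorem matrixV_eq_const_implies_zero
    (K : ℕ) (hK : 0 < K) (T : ℝ) (hT : 0 < T)
    (N : ℕ) (hN : 2 * K + 2 ≤ N)
    (t : Fin N → ℝ) (ht_mono : StrictMono t)
    (ht_nonneg : ∀ n, 0 ≤ t n) (ht_lt : ∀ n, t n < T)
    (V : Matrix (Fin N) (Fin (2 * K + 1)) ℂ)
    (hV : ∀ (n : Fin N) (j : Fin (2 * K + 1)),
      V n j =
        if ((j : ℤ) - (K : ℤ)) = 0 then ((t n : ℝ) : ℂ)
        else Complex.exp (Complex.I * (((j : ℤ) - (K : ℤ) : ℤ) : ℂ)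
              * ((2 * Real.pi / T : ℝ) : ℂ) * ((t n : ℝ) : ℂ))) :
    ∀ (x : Fin (2 * K + 1) → ℂ) (c : ℂ),
      V.mulVec x = (fun _ : Fin N => c) → (x = 0 ∧ c = 0) :=
  matrixV_eq_const_implies_zero_general K T hT N hN t ht_mono ht_nonneg ht_lt V hV
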